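/- Let A be a C*-algebra and let a, b ∈ A be regular elements such that ab is regular. Set p = bb†, q = a†(a†)*, r = bb*, s = a†a. Then (ab)† = b†a† if and only if spqp = qp and srsp = sr. -/
import Mathlib

/-- `x` satisfies the four Moore-Penrose equations for `a`. -/
def IsMPInv {A : Type*} [NonUnitalNormedRing A] [StarRing A] [CStarRing A] (a x : A) : Prop :=
  a * x * a = a ∧ x * a * x = x ∧ star (a * x) = a * x ∧ star (x * a) = x * a

section helpers
variable {A : Type*} [NonUnitalNormedRing A] [StarRing A] [CStarRing A]

/-- Uniqueness of the Moore-Penrose inverse. -/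
lemma mp_unique {c x y : A} (hx : IsMPInv c x) (hy : IsMPInv c y) : x = y := by
  obtain ⟨hx1, hx2, hx3, hx4⟩ := hx
  obtain ⟨hy1, hy2, hy3, hy4⟩ := hy
  have hcx : c * x = c * y := by
    calc c * x = (c * y * c) * x := by rw [hy1]
      _ = (c * y) * (c * x) := by rw [mul_assoc, mul_assoc]
      _ = star (c * y) * star (c * x) := by rw [hy3, hx3]
      _ = star ((c * x) * (c * y)) := (star_mul _ _).symm
      _ = star ((c * x * c) * y) := by rw [mul_assoc (c*x) c y]
      _ = star (c * y) := by rw [hx1]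
      _ = c * y := hy3
  have hxc : x * c = y * c := by
    calc x * c = x * (c * y * c) := by rw [hy1]
      _ = (x * c) * (y * c) := by rw [← mul_assoc, ← mul_assoc, mul_assoc (x*c)]
      _ = star (x * c) * star (y * c) := by rw [hx4, hy4]
      _ = star ((y * c) * (x * c)) := (star_mul _ _).symm
      _ = star (y * (c * x * c)) := by rw [mul_assoc y c (x*c), ← mul_assoc c x c]
      _ = star (y * c) := by rw [hx1]
      _ = y * c := hy4
  calc x = x * c * x := hx2.symm
    _ = y * c * x := by rw [hxc]
    _ = y * (c * y) := by rw [mul_assoc, hcx]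
    _ = y := by rw [← mul_assoc, hy2]

/-- Key C*-lemma: for a hermitian idempotent `f` and a Moore-Penrose pair `(b, bd)`,
`f (b b*) f (b b†) = f (b b*)` iff `f` commutes with `b b*`. -/
lemma lemL {f b bd : A} (hff : f * f = f) (hfs : star f = f)
    (hb1 : b * bd * b = b) (hb3 : star (b * bd) = b * bd) :
    f * (b * star b) * f * (b * bd) = f * (b * star b) ↔
      f * (b * star b) = b * star b * f := by
  have hr : star (b * star b) = b * star b := by rw [star_mul, star_star]
  constructor
  · intro h
    have e1 : f * (b * star b) * f * b = f * (b * star b) * b := by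
      calc f * (b * star b) * f * b
          = f * (b * star b) * f * (b * bd * b) := by rw [hb1]
        _ = f * (b * star b) * f * (b * bd) * b := by rw [← mul_assoc]
        _ = f * (b * star b) * b := by rw [h]
    have k1 : (f * b) * (star b * b) = f * (b * star b) * b := by
      simp only [mul_assoc]
    have k2 : (f * b) * (star b * (f * b)) = f * (b * star b) * f * b := by
      simp only [mul_assoc]
    have key : (f * b) * (star b * b - star b * (f * b)) = 0 := by
      rw [mul_sub, k1, k2, e1, sub_self]
    have hd : star (star b - star b * f) = b - f * b := by
      rw [star_sub, star_star, star_mul, star_star, hfs]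
    have hdd : (star b - star b * f) * star (star b - star b * f)
        = star b * b - star b * (f * b) := by
      rw [hd, sub_mul, mul_sub, mul_sub]
      have t3 : star b * f * b = star b * (f * b) := by rw [mul_assoc]
      have t4 : star b * f * (f * b) = star b * (f * b) := by
        calc star b * f * (f * b) = star b * (f * (f * b)) := by rw [mul_assoc]
          _ = star b * (f * f * b) := by rw [← mul_assoc f f b]
          _ = star b * (f * b) := by rw [hff]
      rw [t3, t4, sub_self (star b * (f * b)), sub_zero]
    have hx : ((f * b) * (star b - star b * f)) * star ((f * b) * (star b - star b * f)) = 0 := by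
      calc ((f * b) * (star b - star b * f)) * star ((f * b) * (star b - star b * f))
          = ((f * b) * (star b - star b * f)) * (star (star b - star b * f) * star (f * b)) := by
            rw [star_mul]
        _ = (f * b) * ((star b - star b * f) * star (star b - star b * f)) * star (f * b) := by
            simp only [mul_assoc]
        _ = (f * b) * (star b * b - star b * (f * b)) * star (f * b) := by rw [hdd]
        _ = 0 := by rw [key, zero_mul]
    have hx0 : (f * b) * (star b - star b * f) = 0 :=
      (CStarRing.mul_star_self_eq_zero_iff _).mp hx
    have e2 : f * (b * star b) = f * (b * star b) * f := by
      have h2 : (f * b) * star b = (f * b) * (star b * f) := by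
        have h3 := hx0
        rw [mul_sub] at h3
        exact sub_eq_zero.mp h3
      calc f * (b * star b) = (f * b) * star b := by rw [mul_assoc]
        _ = (f * b) * (star b * f) := h2
        _ = f * (b * star b) * f := by simp only [mul_assoc]
    have e3 : star (f * (b * star b)) = b * star b * f := by
      rw [star_mul, hr, hfs]
    have e4 : star (f * (b * star b) * f) = f * (b * star b * f) := by
      rw [star_mul, e3, hfs]
    have final : b * star b * f = f * (b * star b) := by
      calc b * star b * f = star (f * (b * star b)) := e3.symm
        _ = star (f * (b * star b) * f) := by rw [← e2]
        _ = f * (b * star b * f) := e4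
        _ = f * (b * star b) * f := by rw [← mul_assoc f (b * star b) f]
        _ = f * (b * star b) := e2.symm
    exact final.symm
  · intro h
    have hrG : b * star b * (b * bd) = b * star b := by
      calc b * star b * (b * bd) = b * (star b * (b * bd)) := by rw [mul_assoc]
        _ = b * (star b * star (b * bd)) := by rw [hb3]
        _ = b * star ((b * bd) * b) := by rw [← star_mul]
        _ = b * star b := by rw [hb1]
    calc f * (b * star b) * f * (b * bd)
        = (b * star b) * f * f * (b * bd) := by rw [h]
      _ = b * star b * f * (b * bd) := by rw [mul_assoc (b * star b) f f, hff]
      _ = f * (b * star b) * (b * bd) := by rw [← h]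
      _ = f * ((b * star b) * (b * bd)) := by rw [mul_assoc]
      _ = f * (b * star b) := by rw [hrG]

end helpers

theorem stmt_11 {A : Type*} [NonUnitalNormedRing A] [StarRing A] [CStarRing A]
    (a b ad bd abd p q r s : A)
    (ha : IsMPInv a ad) (hb : IsMPInv b bd) (hab : IsMPInv (a * b) abd)
    (hp : p = b * bd) (hq : q = ad * star ad) (hr : r = b * star b) (hs : s = ad * a) :
    abd = bd * ad ↔ (s * p * q * p = q * p ∧ s * r * s * p = s * r) := by
  subst hp hq hr hs
  obtain ⟨ha1, ha2, ha3, ha4⟩ := ha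
  obtain ⟨hb1, hb2, hb3, hb4⟩ := hb
  -- basic star-pair identities
  have sa3b : star ad * star a = a * ad := by rw [← star_mul]; exact ha3
  have sa4b : star a * star ad = ad * a := by rw [← star_mul]; exact ha4
  have sb3b : star bd * star b = b * bd := by rw [← star_mul]; exact hb3
  have sb4b : star b * star bd = bd * b := by rw [← star_mul]; exact hb4
  -- derived bare identities
  have haqb : a * ad * star ad = star ad := by
    calc a * ad * star ad = star (a * ad) * star ad := by rw [ha3]
      _ = star (ad * (a * ad)) := (star_mul _ _).symm
      _ = star (ad * a * ad) := by rw [← mul_assoc]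
      _ = star ad := by rw [ha2]
  have hqab : ad * star ad * star a = ad := by
    calc ad * star ad * star a = ad * (star ad * star a) := by rw [mul_assoc]
      _ = ad * (a * ad) := by rw [sa3b]
      _ = ad * a * ad := by rw [← mul_assoc]
      _ = ad := ha2
  have hrb6 : b * (star b * star bd) = b := by
    calc b * (star b * star bd) = b * (bd * b) := by rw [sb4b]
      _ = b * bd * b := by rw [← mul_assoc]
      _ = b := hb1
  have hrb7 : bd * (b * star b) = star b := by
    calc bd * (b * star b) = bd * b * star b := by rw [← mul_assoc]
      _ = star (bd * b) * star b := by rw [hb4]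
      _ = star (b * (bd * b)) := (star_mul _ _).symm
      _ = star (b * bd * b) := by rw [← mul_assoc]
      _ = star b := by rw [hb1]
  -- rule forms (right-associated, with trailing factor)
  have ra1 : ∀ t : A, a * (ad * (a * t)) = a * t := fun t => by
    simpa only [mul_assoc] using congrArg (· * t) ha1
  have ra2 : ∀ t : A, ad * (a * (ad * t)) = ad * t := fun t => by
    simpa only [mul_assoc] using congrArg (· * t) ha2
  have rb1 : ∀ t : A, b * (bd * (b * t)) = b * t := fun t => by
    simpa only [mul_assoc] using congrArg (· * t) hb1
  have rb2 : ∀ t : A, bd * (b * (bd * t)) = bd * t := fun t => by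
    simpa only [mul_assoc] using congrArg (· * t) hb2
  have sa4 : ∀ t : A, star a * (star ad * t) = ad * (a * t) := fun t => by
    simpa only [mul_assoc] using congrArg (· * t) sa4b
  have sb3 : ∀ t : A, star bd * (star b * t) = b * (bd * t) := fun t => by
    simpa only [mul_assoc] using congrArg (· * t) sb3b
  have rq1 : ∀ t : A, a * (ad * (star ad * t)) = star ad * t := fun t => by
    simpa only [mul_assoc] using congrArg (· * t) haqb
  have rq2b : ad * (star ad * star a) = ad := by
    simpa only [mul_assoc] using hqab
  have rb6b : b * (star b * star bd) = b := hrb6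
  have rb7 : ∀ t : A, bd * (b * (star b * t)) = star b * t := fun t => by
    simpa only [mul_assoc] using congrArg (· * t) hrb7
  constructor
  · -- forward: reverse order law implies the two conditions
    intro h
    have hm := hab
    rw [h] at hm
    obtain ⟨m1, m2, m3, m4⟩ := hm
    -- f1 : r F B* = G F b
    have f1 : b * (star b * (ad * (a * star bd))) = b * (bd * (ad * (a * b))) := by
      simpa only [star_mul, star_star, mul_assoc, sa4] using congrArg (b * ·) m4
    -- f2 : F G F b = F b
    have f2 : ad * (a * (b * (bd * (ad * (a * b))))) = ad * (a * b) := by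
      simpa only [mul_assoc] using congrArg (ad * ·) m1
    rw [← f1] at f2
    -- f2 : F r F B* = F b
    have f4 : ad * (a * (b * (star b * (ad * (a * (b * bd)))))) = ad * (a * (b * star b)) := by
      simpa only [mul_assoc, sb3b] using congrArg (· * star b) f2
    -- m3' : A* G a* = a G A
    have m3' : star ad * (b * (bd * star a)) = a * (b * (bd * ad)) := by
      simpa only [star_mul, mul_assoc, sb3] using m3
    -- f5 : q G F = F G q
    have f5 : ad * (star ad * (b * (bd * (ad * a)))) = ad * (a * (b * (bd * (ad * star ad)))) := by
      simpa only [mul_assoc, sa4b, sa4] using congrArg (fun t => ad * (t * star ad)) m3'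
    -- f6 : G F G q = G q
    have f6 : b * (bd * (ad * (a * (b * (bd * (ad * star ad)))))) = b * (bd * (ad * star ad)) := by
      simpa only [mul_assoc] using congrArg (fun t => b * (t * star ad)) m2
    rw [← f5] at f6
    -- f6 : G q G F = G q ; take star to get F G q G = q G
    have f8 : ad * (a * (b * (bd * (ad * (star ad * (b * bd)))))) = ad * (star ad * (b * bd)) := by
      simpa only [star_mul, star_star, mul_assoc, sb3, sb3b, sa4, sa4b] using congrArg star f6
    constructor
    · simp only [mul_assoc]
      exact f8
    · simp only [mul_assoc]
      exact f4
  · -- backward: the two conditions imply the reverse order law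
    rintro ⟨h1, h2⟩
    -- commutation of F = ad*a with b*(star b)
    have hffF : (ad * a) * (ad * a) = ad * a := by
      simp only [mul_assoc]; rw [ra2]
    have hFr : (ad * a) * (b * star b) = (b * star b) * (ad * a) :=
      (lemL hffF ha4 hb1 hb3).mp h2
    -- commutation of G = b*bd with ad*(star ad)
    have hffG : (b * bd) * (b * bd) = b * bd := by
      simp only [mul_assoc]; rw [rb1]
    have h1n : b * (bd * (ad * (star ad * (b * (bd * (ad * a)))))) = b * (bd * (ad * star ad)) := by
      simpa only [star_mul, star_star, mul_assoc, sb3, sb3b, sa4, sa4b] using congrArg star h1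
    have hGq : (b * bd) * (ad * star ad) = (ad * star ad) * (b * bd) :=
      (lemL hffG hb3 ha2 ha4).mp (by simp only [mul_assoc]; exact h1n)
    -- commutation rules with trailing factor
    have cFr : ∀ t : A, ad * (a * (b * (star b * t))) = b * (star b * (ad * (a * t))) := fun t => by
      simpa only [mul_assoc] using congrArg (· * t) hFr
    have cGq : ∀ t : A, b * (bd * (ad * (star ad * t))) = ad * (star ad * (b * (bd * t))) :=
      fun t => by simpa only [mul_assoc] using congrArg (· * t) hGq
    -- the four Moore-Penrose equations for bd * ad
    have mp1 : a * (b * (bd * (ad * (a * b)))) = a * b := by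
      calc a * (b * (bd * (ad * (a * b))))
          = a * (b * (bd * (ad * (a * (b * (star b * star bd)))))) := by rw [rb6b]
        _ = a * (b * (bd * (b * (star b * (ad * (a * star bd))))))  := by rw [cFr (star bd)]
        _ = a * (b * (star b * (ad * (a * star bd)))) := by rw [rb1]
        _ = a * (ad * (a * (b * (star b * star bd)))) := by rw [← cFr (star bd)]
        _ = a * (b * (star b * star bd)) := by rw [ra1]
        _ = a * b := by rw [rb6b]
    have mp2 : bd * (ad * (a * (b * (bd * ad)))) = bd * ad := by
      calc bd * (ad * (a * (b * (bd * ad))))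
          = bd * (ad * (a * (b * (bd * (ad * (star ad * star a)))))) := by rw [rq2b]
        _ = bd * (ad * (a * (ad * (star ad * (b * (bd * star a)))))) := by rw [cGq (star a)]
        _ = bd * (ad * (star ad * (b * (bd * star a)))) := by rw [ra2]
        _ = bd * (b * (bd * (ad * (star ad * star a)))) := by rw [← cGq (star a)]
        _ = bd * (ad * (star ad * star a)) := by rw [rb2]
        _ = bd * ad := by rw [rq2b]
    have mp3 : a * (b * (bd * ad)) = star ad * (b * (bd * star a)) := by
      calc a * (b * (bd * ad))
          = a * (b * (bd * (ad * (star ad * star a)))) := by rw [rq2b]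
        _ = a * (ad * (star ad * (b * (bd * star a)))) := by rw [cGq (star a)]
        _ = star ad * (b * (bd * star a)) := by rw [rq1]
    have mp4 : bd * (ad * (a * b)) = star b * (ad * (a * star bd)) := by
      calc bd * (ad * (a * b))
          = bd * (ad * (a * (b * (star b * star bd)))) := by rw [rb6b]
        _ = bd * (b * (star b * (ad * (a * star bd)))) := by rw [cFr (star bd)]
        _ = star b * (ad * (a * star bd)) := by rw [rb7]
    have hBA : IsMPInv (a * b) (bd * ad) := by
      refine ⟨?_, ?_, ?_, ?_⟩
      · simp only [mul_assoc]; exact mp1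
      · simp only [mul_assoc]; exact mp2
      · simp only [star_mul, mul_assoc, sb3]
        exact mp3.symm
      · simp only [star_mul, mul_assoc, sa4]
        exact mp4.symm
    exact mp_unique hab hBA
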